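/- In d dimensions with d ≠ 1, d ≠ 2, the operators 𝒪^{λ₁}_{α₁β₁}{}^{λ₂}_{α₂β₂}(𝔤) = (1/4)(δ^{λ₁}_{α₂}δ^{λ₂}_{α₁}𝔤_{β₁β₂} + [3 symmetrizations]) − (1/4)𝔤^{λ₁λ₂}(𝔤_{α₁α₂}𝔤_{β₁β₂} + 𝔤_{α₁β₂}𝔤_{α₂β₁}) + (1/(2(d−2)))𝔤^{λ₁λ₂}𝔤_{α₁β₁}𝔤_{α₂β₂} and (𝒪⁻¹)_{λ₁}{}^{α₁β₁}{}_{λ₂}{}^{α₂β₂}(𝔤) = (1/2)(δ_{λ₁}^{α₂}δ_{λ₂}^{α₁}𝔤^{β₁β₂} + [3 symmetrizations]) − (1/(2(d−1)))(δ_{λ₁}^{α₁}δ_{λ₂}^{α₂}𝔤^{β₁β₂} + [3 symmetrizations]) are mutually inverse: contracting 𝒪⁻¹ with 𝒪 over the triple index (λ, symmetric pair) yields δ_{λ₁}^{λ₃} I_{α₁β₁}^{α₃β₃}. -/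

import Mathlib

/-!
Contracting `𝒪⁻¹` with any tensor `T^{λ}_{αβ}` symmetric in `αβ` leaves only the single
contractions `𝔤^{β₁μ} T^{α₁}_{λ₁μ}` and the traces `𝔤^{β₁ν} T^{μ}_{μν}`. For `T = 𝒪(·; λ₃α₃β₃)`
the single contractions are computed from `𝔤^{μν}𝔤_{νρ} = δ^μ_ρ`, and the trace is
`(d - 1)/(2(d - 2)) 𝔤_{α₃β₃} δ^{λ₃}_ν`, whose factor `d - 1` cancels the normalisation of the
trace part of `𝒪⁻¹`. Both operators are symmetric under exchanging their two index triples,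
which turns the product in one order into the product in the other.
-/

noncomputable section

/-- Kronecker delta. -/
def kron {d : ℕ} (i j : Fin d) : ℝ := if i = j then 1 else 0

/-- Identity on symmetric rank-2 tensors. -/
def Isym {d : ℕ} (α β ρ σ : Fin d) : ℝ :=
  (kron α ρ * kron β σ + kron α σ * kron β ρ) / 2

namespace CheungRemmen

variable {d : ℕ}

def kinOp (g ginv : Fin d → Fin d → ℝ) (l1 a1 b1 l2 a2 b2 : Fin d) : ℝ :=
  (1 / 4) * (kron l1 a2 * kron l2 a1 * g b1 b2 + kron l1 b2 * kron l2 a1 * g b1 a2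
    + kron l1 a2 * kron l2 b1 * g a1 b2 + kron l1 b2 * kron l2 b1 * g a1 a2)
  - (1 / 4) * ginv l1 l2 * (g a1 a2 * g b1 b2 + g a1 b2 * g a2 b1)
  + (1 / (2 * ((d : ℝ) - 2))) * ginv l1 l2 * g a1 b1 * g a2 b2

def kinOpInv (ginv : Fin d → Fin d → ℝ) (l1 a1 b1 l2 a2 b2 : Fin d) : ℝ :=
  (1 / 2) * (kron l1 a2 * kron l2 a1 * ginv b1 b2 + kron l1 b2 * kron l2 a1 * ginv b1 a2
    + kron l1 a2 * kron l2 b1 * ginv a1 b2 + kron l1 b2 * kron l2 b1 * ginv a1 a2)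
  - (1 / (2 * ((d : ℝ) - 1)))
    * (kron l1 a1 * kron l2 a2 * ginv b1 b2 + kron l1 a1 * kron l2 b2 * ginv b1 a2
      + kron l1 b1 * kron l2 a2 * ginv a1 b2 + kron l1 b1 * kron l2 b2 * ginv a1 a2)

lemma kron_comm (i j : Fin d) : kron i j = kron j i := by
  simp [kron, eq_comm]

lemma sum_mul_kron (f : Fin d → ℝ) (j : Fin d) : ∑ μ, f μ * kron j μ = f j := by
  simp [kron]

lemma sum_kron_mul (f : Fin d → ℝ) (i : Fin d) : ∑ μ, kron μ i * f μ = f i := by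
  simp [kron]

lemma sum_kinOpInv_mul (ginv : Fin d → Fin d → ℝ) (T : Fin d → Fin d → Fin d → ℝ)
    (l1 a1 b1 : Fin d) :
    ∑ l2, ∑ a2, ∑ b2, kinOpInv ginv l1 a1 b1 l2 a2 b2 * T l2 a2 b2
      = (1 / 2) * (∑ μ, ginv b1 μ * T a1 l1 μ + ∑ μ, ginv b1 μ * T a1 μ l1
          + ∑ μ, ginv a1 μ * T b1 l1 μ + ∑ μ, ginv a1 μ * T b1 μ l1)
        - 1 / (2 * ((d : ℝ) - 1)) *
          (kron l1 a1 * ∑ μ, ∑ ν, ginv b1 ν * (T μ μ ν + T μ ν μ)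
            + kron l1 b1 * ∑ μ, ∑ ν, ginv a1 ν * (T μ μ ν + T μ ν μ)) := by
  simp only [kinOpInv, sub_mul, add_mul, mul_assoc, Finset.sum_sub_distrib]
  simp [kron, mul_ite, ite_mul, add_mul, mul_add, Finset.sum_add_distrib, Finset.sum_ite_irrel,
    Finset.mul_sum, mul_comm, add_assoc]

lemma sum_kinOpInv_mul_of_symm (ginv : Fin d → Fin d → ℝ) (T : Fin d → Fin d → Fin d → ℝ)
    (hT : ∀ l a b, T l a b = T l b a) (l1 a1 b1 : Fin d) :
    ∑ l2, ∑ a2, ∑ b2, kinOpInv ginv l1 a1 b1 l2 a2 b2 * T l2 a2 b2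
      = ∑ μ, ginv b1 μ * T a1 l1 μ + ∑ μ, ginv a1 μ * T b1 l1 μ
        - 1 / ((d : ℝ) - 1) * (kron l1 a1 * ∑ ν, ginv b1 ν * ∑ μ, T μ μ ν
          + kron l1 b1 * ∑ ν, ginv a1 ν * ∑ μ, T μ μ ν) := by
  have trace : ∀ z, ∑ μ, ∑ ν, ginv z ν * (T μ μ ν + T μ ν μ)
      = 2 * ∑ ν, ginv z ν * ∑ μ, T μ μ ν := by
    intro z
    rw [Finset.sum_comm, Finset.mul_sum]
    refine Finset.sum_congr rfl fun ν _ => ?_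
    simp only [hT _ ν, ← two_mul, Finset.mul_sum, mul_left_comm]
  rw [sum_kinOpInv_mul, trace, trace]
  simp only [← hT _ l1, one_div, mul_inv]
  ring

section Metric

variable (g ginv : Fin d → Fin d → ℝ)

lemma sum_ginv_mul_g_swap (hg : ∀ μ ν, g μ ν = g ν μ)
    (hinv : ∀ μ ν, ∑ l, ginv μ l * g l ν = kron μ ν) (x y : Fin d) :
    ∑ μ, ginv x μ * g y μ = kron x y := by
  simpa only [hg y] using hinv x y

lemma sum_ginv_swap_mul_g (hginv : ∀ μ ν, ginv μ ν = ginv ν μ)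
    (hinv : ∀ μ ν, ∑ l, ginv μ l * g l ν = kron μ ν) (x y : Fin d) :
    ∑ μ, ginv μ x * g μ y = kron x y := by
  simpa only [hginv _ x] using hinv x y

lemma kinOp_swap (hg : ∀ μ ν, g μ ν = g ν μ) (l x y l2 a2 b2 : Fin d) :
    kinOp g ginv l x y l2 a2 b2 = kinOp g ginv l y x l2 a2 b2 := by
  simp only [kinOp, hg a2 x, hg y x, hg a2 y]
  ring

lemma kinOp_exchange (hg : ∀ μ ν, g μ ν = g ν μ) (hginv : ∀ μ ν, ginv μ ν = ginv ν μ)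
    (l1 a1 b1 l2 a2 b2 : Fin d) :
    kinOp g ginv l1 a1 b1 l2 a2 b2 = kinOp g ginv l2 a2 b2 l1 a1 b1 := by
  simp only [kinOp, hginv l2 l1, hg b2 b1, hg b2 a1, hg a2 b1, hg a2 a1]
  ring

lemma kinOpInv_exchange (hginv : ∀ μ ν, ginv μ ν = ginv ν μ) (l1 a1 b1 l2 a2 b2 : Fin d) :
    kinOpInv ginv l1 a1 b1 l2 a2 b2 = kinOpInv ginv l2 a2 b2 l1 a1 b1 := by
  simp only [kinOpInv, hginv b2 b1, hginv b2 a1, hginv a2 b1, hginv a2 a1]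
  ring

lemma sum_ginv_mul_kinOp (hg : ∀ μ ν, g μ ν = g ν μ)
    (hinv : ∀ μ ν, ∑ l, ginv μ l * g l ν = kron μ ν) (x y z l3 a3 b3 : Fin d) :
    ∑ μ, ginv z μ * kinOp g ginv x y μ l3 a3 b3
      = (1 / 4) * (kron x a3 * kron l3 y * kron z b3 + kron x b3 * kron l3 y * kron z a3
          + kron x a3 * ginv z l3 * g y b3 + kron x b3 * ginv z l3 * g y a3)
        - (1 / 4) * ginv x l3 * (g y a3 * kron z b3 + g y b3 * kron z a3)
        + 1 / (2 * ((d : ℝ) - 2)) * ginv x l3 * kron z y * g a3 b3 := by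
  have expand : ∀ μ, ginv z μ * kinOp g ginv x y μ l3 a3 b3 =
      ((1 / 4) * (kron x a3 * kron l3 y) - (1 / 4) * (ginv x l3 * g y a3)) * (ginv z μ * g μ b3)
      + ((1 / 4) * (kron x b3 * kron l3 y)) * (ginv z μ * g μ a3)
      + ((1 / 4) * (kron x a3 * g y b3 + kron x b3 * g y a3)) * (ginv z μ * kron l3 μ)
      - ((1 / 4) * (ginv x l3 * g y b3)) * (ginv z μ * g a3 μ)
      + (1 / (2 * ((d : ℝ) - 2)) * (ginv x l3 * g a3 b3)) * (ginv z μ * g y μ) := by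
    intro μ
    simp only [kinOp]
    ring
  simp only [expand, Finset.sum_add_distrib, Finset.sum_sub_distrib, ← Finset.mul_sum, hinv,
    sum_mul_kron, sum_ginv_mul_g_swap g ginv hg hinv]
  ring

lemma sum_kinOp_diag (hg : ∀ μ ν, g μ ν = g ν μ) (hginv : ∀ μ ν, ginv μ ν = ginv ν μ)
    (hinv : ∀ μ ν, ∑ l, ginv μ l * g l ν = kron μ ν) (ν l3 a3 b3 : Fin d) :
    ∑ μ, kinOp g ginv μ μ ν l3 a3 b3
      = (1 / 2 + 1 / (2 * ((d : ℝ) - 2))) * g a3 b3 * kron l3 ν := by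
  have expand : ∀ μ, kinOp g ginv μ μ ν l3 a3 b3 =
      ((1 / 4) * g ν b3) * (kron μ a3 * kron l3 μ)
      + ((1 / 4) * g ν a3) * (kron μ b3 * kron l3 μ)
      + ((1 / 4) * kron l3 ν) * (kron μ a3 * g μ b3)
      + ((1 / 4) * kron l3 ν) * (kron μ b3 * g μ a3)
      - ((1 / 4) * g ν b3) * (ginv μ l3 * g μ a3)
      - ((1 / 4) * g a3 ν) * (ginv μ l3 * g μ b3)
      + (1 / (2 * ((d : ℝ) - 2)) * g a3 b3) * (ginv μ l3 * g μ ν) := by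
    intro μ
    simp only [kinOp]
    ring
  simp only [expand, Finset.sum_add_distrib, Finset.sum_sub_distrib, ← Finset.mul_sum,
    sum_kron_mul, sum_ginv_swap_mul_g g ginv hginv hinv, hg b3 a3, hg a3 ν]
  ring

theorem sum_kinOpInv_mul_kinOp (hg : ∀ μ ν, g μ ν = g ν μ)
    (hginv : ∀ μ ν, ginv μ ν = ginv ν μ) (hinv : ∀ μ ν, ∑ l, ginv μ l * g l ν = kron μ ν)
    (hd1 : (d : ℝ) - 1 ≠ 0) (hd2 : (d : ℝ) - 2 ≠ 0) (l1 a1 b1 l3 a3 b3 : Fin d) :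
    ∑ l2, ∑ a2, ∑ b2, kinOpInv ginv l1 a1 b1 l2 a2 b2 * kinOp g ginv l2 a2 b2 l3 a3 b3
      = kron l1 l3 * Isym a1 b1 a3 b3 := by
  rw [sum_kinOpInv_mul_of_symm ginv (fun l2 a2 b2 => kinOp g ginv l2 a2 b2 l3 a3 b3)
    (fun l a b => kinOp_swap g ginv hg l a b l3 a3 b3)]
  simp only [sum_ginv_mul_kinOp g ginv hg hinv, sum_kinOp_diag g ginv hg hginv hinv,
    mul_left_comm (ginv _ _), ← Finset.mul_sum, sum_mul_kron]
  simp only [Isym, kron_comm l3 l1, kron_comm a1 l1, kron_comm b1 l1]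
  field_simp
  ring

theorem sum_kinOp_mul_kinOpInv (hg : ∀ μ ν, g μ ν = g ν μ)
    (hginv : ∀ μ ν, ginv μ ν = ginv ν μ) (hinv : ∀ μ ν, ∑ l, ginv μ l * g l ν = kron μ ν)
    (hd1 : (d : ℝ) - 1 ≠ 0) (hd2 : (d : ℝ) - 2 ≠ 0) (l1 a1 b1 l3 a3 b3 : Fin d) :
    ∑ l2, ∑ a2, ∑ b2, kinOp g ginv l1 a1 b1 l2 a2 b2 * kinOpInv ginv l2 a2 b2 l3 a3 b3
      = kron l1 l3 * Isym a1 b1 a3 b3 := by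
  simp only [kinOp_exchange g ginv hg hginv l1 a1 b1, kinOpInv_exchange ginv hginv _ _ _ l3 a3 b3,
    mul_comm (kinOp _ _ _ _ _ _ _ _), sum_kinOpInv_mul_kinOp g ginv hg hginv hinv hd1 hd2, Isym]
  rw [kron_comm l3 l1, kron_comm a3 a1, kron_comm b3 b1, kron_comm a3 b1, kron_comm b3 a1]
  ring

end Metric

end CheungRemmen

theorem stmt14_general (d : ℕ) (hd1 : d ≠ 1) (hd2 : d ≠ 2)
    (g ginv : Fin d → Fin d → ℝ)
    (hg : ∀ μ ν, g μ ν = g ν μ) (hginv : ∀ μ ν, ginv μ ν = ginv ν μ)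
    (hinv' : ∀ μ ν, ∑ l, ginv μ l * g l ν = kron μ ν) :
    -- 𝒪^{λ₁}_{α₁β₁}{}^{λ₂}_{α₂β₂}(𝔤)
    let Oop : Fin d → Fin d → Fin d → Fin d → Fin d → Fin d → ℝ :=
      fun l1 a1 b1 l2 a2 b2 =>
        (1 / 4) * (kron l1 a2 * kron l2 a1 * g b1 b2 + kron l1 b2 * kron l2 a1 * g b1 a2
          + kron l1 a2 * kron l2 b1 * g a1 b2 + kron l1 b2 * kron l2 b1 * g a1 a2)
        - (1 / 4) * ginv l1 l2 * (g a1 a2 * g b1 b2 + g a1 b2 * g a2 b1)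
        + (1 / (2 * ((d : ℝ) - 2))) * ginv l1 l2 * g a1 b1 * g a2 b2
    -- (𝒪⁻¹)_{λ₁}{}^{α₁β₁}{}_{λ₂}{}^{α₂β₂}(𝔤)
    let Oinv : Fin d → Fin d → Fin d → Fin d → Fin d → Fin d → ℝ :=
      fun l1 a1 b1 l2 a2 b2 =>
        (1 / 2) * (kron l1 a2 * kron l2 a1 * ginv b1 b2 + kron l1 b2 * kron l2 a1 * ginv b1 a2
          + kron l1 a2 * kron l2 b1 * ginv a1 b2 + kron l1 b2 * kron l2 b1 * ginv a1 a2)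
        - (1 / (2 * ((d : ℝ) - 1)))
          * (kron l1 a1 * kron l2 a2 * ginv b1 b2 + kron l1 a1 * kron l2 b2 * ginv b1 a2
            + kron l1 b1 * kron l2 a2 * ginv a1 b2 + kron l1 b1 * kron l2 b2 * ginv a1 a2)
    (∀ l1 a1 b1 l3 a3 b3,
      ∑ l2, ∑ a2, ∑ b2, Oinv l1 a1 b1 l2 a2 b2 * Oop l2 a2 b2 l3 a3 b3
        = kron l1 l3 * Isym a1 b1 a3 b3) ∧
    (∀ l1 a1 b1 l3 a3 b3,
      ∑ l2, ∑ a2, ∑ b2, Oop l1 a1 b1 l2 a2 b2 * Oinv l2 a2 b2 l3 a3 b3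
        = kron l1 l3 * Isym a1 b1 a3 b3) := by
  have hd1' : (d : ℝ) - 1 ≠ 0 := sub_ne_zero.mpr (by exact_mod_cast hd1)
  have hd2' : (d : ℝ) - 2 ≠ 0 := sub_ne_zero.mpr (by exact_mod_cast hd2)
  exact ⟨CheungRemmen.sum_kinOpInv_mul_kinOp g ginv hg hginv hinv' hd1' hd2',
    CheungRemmen.sum_kinOp_mul_kinOpInv g ginv hg hginv hinv' hd1' hd2'⟩

/-- The kinetic operator `𝒪(𝔤)` of the first-order Cheung–Remmen form of the
Hilbert action and the stated `𝒪⁻¹(𝔤)` are mutually inverse: contracting over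
the triple index (λ, symmetric pair) yields `δ_{λ₁}^{λ₃} I_{α₁β₁}^{α₃β₃}`. -/
theorem stmt14 (d : ℕ) (hd1 : d ≠ 1) (hd2 : d ≠ 2)
    (g ginv : Fin d → Fin d → ℝ)
    (hg : ∀ μ ν, g μ ν = g ν μ) (hginv : ∀ μ ν, ginv μ ν = ginv ν μ)
    (hinv : ∀ μ ν, ∑ l, g μ l * ginv l ν = kron μ ν)
    (hinv' : ∀ μ ν, ∑ l, ginv μ l * g l ν = kron μ ν) :
    -- 𝒪^{λ₁}_{α₁β₁}{}^{λ₂}_{α₂β₂}(𝔤)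
    let Oop : Fin d → Fin d → Fin d → Fin d → Fin d → Fin d → ℝ :=
      fun l1 a1 b1 l2 a2 b2 =>
        (1 / 4) * (kron l1 a2 * kron l2 a1 * g b1 b2 + kron l1 b2 * kron l2 a1 * g b1 a2
          + kron l1 a2 * kron l2 b1 * g a1 b2 + kron l1 b2 * kron l2 b1 * g a1 a2)
        - (1 / 4) * ginv l1 l2 * (g a1 a2 * g b1 b2 + g a1 b2 * g a2 b1)
        + (1 / (2 * ((d : ℝ) - 2))) * ginv l1 l2 * g a1 b1 * g a2 b2
    -- (𝒪⁻¹)_{λ₁}{}^{α₁β₁}{}_{λ₂}{}^{α₂β₂}(𝔤)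
    let Oinv : Fin d → Fin d → Fin d → Fin d → Fin d → Fin d → ℝ :=
      fun l1 a1 b1 l2 a2 b2 =>
        (1 / 2) * (kron l1 a2 * kron l2 a1 * ginv b1 b2 + kron l1 b2 * kron l2 a1 * ginv b1 a2
          + kron l1 a2 * kron l2 b1 * ginv a1 b2 + kron l1 b2 * kron l2 b1 * ginv a1 a2)
        - (1 / (2 * ((d : ℝ) - 1)))
          * (kron l1 a1 * kron l2 a2 * ginv b1 b2 + kron l1 a1 * kron l2 b2 * ginv b1 a2
            + kron l1 b1 * kron l2 a2 * ginv a1 b2 + kron l1 b1 * kron l2 b2 * ginv a1 a2)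
    (∀ l1 a1 b1 l3 a3 b3,
      ∑ l2, ∑ a2, ∑ b2, Oinv l1 a1 b1 l2 a2 b2 * Oop l2 a2 b2 l3 a3 b3
        = kron l1 l3 * Isym a1 b1 a3 b3) ∧
    (∀ l1 a1 b1 l3 a3 b3,
      ∑ l2, ∑ a2, ∑ b2, Oop l1 a1 b1 l2 a2 b2 * Oinv l2 a2 b2 l3 a3 b3
        = kron l1 l3 * Isym a1 b1 a3 b3) :=
  stmt14_general d hd1 hd2 g ginv hg hginv hinv'
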